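/- Let α > 0 and let f ∈ B₁(α) with Taylor coefficients a₂, a₃. If |a₂| ≥ 2/√((α+1)² + 1), then |a₃ − a₂²/2| ≥ (((α+1)² + 1)/(2(α+2))) |a₂|² − 2/(α+2). -/

import Mathlib

open Complex Metric

/-- The Bazilevič class `B₁(α)`: `f` is analytic on the unit disk with `f 0 = 0`,
`f' 0 = 1`, and `Re[(f z / z)^(α-1) * f' z] > 0` on the disk, where the power is taken
with the analytic branch equal to `1` at `z = 0`.  The branch is encoded via an analytic
function `h` with `h 0 = 0` and `f z = z * exp (h z)` on the disk (so that
`h = log (f z / z)` and `(f z / z)^(α-1) = exp ((α-1) * h z)`). -/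
def BazilevicB1 (α : ℝ) (f h : ℂ → ℂ) : Prop :=
  AnalyticOnNhd ℂ f (ball 0 1) ∧ AnalyticOnNhd ℂ h (ball 0 1) ∧
  f 0 = 0 ∧ deriv f 0 = 1 ∧ h 0 = 0 ∧
  (∀ z ∈ ball (0 : ℂ) 1, f z = z * Complex.exp (h z)) ∧
  (∀ z ∈ ball (0 : ℂ) 1, 0 < (Complex.exp ((α - 1 : ℂ) * h z) * deriv f z).re)

/-- The first logarithmic coefficient `γ₁`, from `h = log (f z / z) = 2 ∑ γₙ zⁿ`. -/
noncomputable def logCoeff1 (h : ℂ → ℂ) : ℂ := deriv h 0 / 2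

/-- The second logarithmic coefficient `γ₂`, from `h = log (f z / z) = 2 ∑ γₙ zⁿ`. -/
noncomputable def logCoeff2 (h : ℂ → ℂ) : ℂ := iteratedDeriv 2 h 0 / 4

/-- The second Taylor coefficient `a₂` of `f`. -/
noncomputable def coeff2 (f : ℂ → ℂ) : ℂ := iteratedDeriv 2 f 0 / 2

/-- The third Taylor coefficient `a₃` of `f`. -/
noncomputable def coeff3 (f : ℂ → ℂ) : ℂ := iteratedDeriv 3 f 0 / 6

/-!
Put `p = (f / z) ^ (α - 1) * f'` and `f = z * exp h`. Then `Re p > 0`, `p 0 = 1`,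
`a₂ = h'(0)`, `a₃ - a₂² / 2 = h''(0) / 2`, `p'(0) = (α + 1) h'(0)` and
`p''(0) - p'(0)² = (α + 2) h''(0) - h'(0)²`.
Schwarz–Pick applied to `dslope w 0`, where `w = (p - 1) / (p + 1)` is a self-map of the disc
fixing `0`, gives the sharp Carathéodory bound `|p''(0) - p'(0)²| ≤ 4 - |p'(0)|²`; the triangle
inequality then bounds `(α + 2) |h''(0)|` from below.
-/

open Complex Metric Filter Set Topology ComplexConjugate

section IteratedDeriv

variable {𝕜 : Type*} [NontriviallyNormedField 𝕜] {n : ℕ} {u v : 𝕜 → 𝕜} {x : 𝕜}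

theorem iteratedDeriv_succ_id_mul_zero (hu : ContDiffAt 𝕜 (n + 1 : ℕ) u 0) :
    iteratedDeriv (n + 1) (fun z => z * u z) 0 = (n + 1) * iteratedDeriv n u 0 := by
  rw [iteratedDeriv_fun_mul (f := fun z => z) contDiffAt_id hu, Finset.sum_eq_single 1]
  · simp [iteratedDeriv_fun_id_zero]
  · intro i _ hi
    simp [iteratedDeriv_fun_id_zero, hi]
  · simp

theorem iteratedDeriv_two_mul (hu : ContDiffAt 𝕜 2 u x) (hv : ContDiffAt 𝕜 2 v x) :
    iteratedDeriv 2 (fun z => u z * v z) x =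
      iteratedDeriv 2 u x * v x + 2 * (deriv u x * deriv v x) + u x * iteratedDeriv 2 v x := by
  rw [iteratedDeriv_fun_mul hu hv]
  simp only [Finset.sum_range_succ, Finset.range_one, Finset.sum_singleton, Nat.choose_zero_right,
    Nat.choose_succ_self_right, Nat.choose_self, Nat.cast_one, Nat.cast_ofNat, iteratedDeriv_zero,
    iteratedDeriv_one, Nat.reduceAdd, Nat.add_one_sub_one, tsub_zero, tsub_self]
  ring

end IteratedDeriv

theorem iteratedDeriv_two_cexp_comp {v : ℂ → ℂ} {x : ℂ} (hv : AnalyticAt ℂ v x) :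
    iteratedDeriv 2 (fun z => exp (v z)) x =
      exp (v x) * (deriv v x ^ 2 + iteratedDeriv 2 v x) := by
  have hderiv : deriv (fun z => exp (v z)) =ᶠ[𝓝 x] fun z => exp (v z) * deriv v z := by
    filter_upwards [hv.eventually_analyticAt] with y hy using deriv_cexp hy.differentiableAt
  rw [iteratedDeriv_succ', iteratedDeriv_one, hderiv.deriv_eq,
    deriv_fun_mul (c := fun z => exp (v z)) hv.cexp.differentiableAt hv.deriv.differentiableAt,
    deriv_cexp hv.differentiableAt, iteratedDeriv_succ, iteratedDeriv_one]
  ring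

namespace Complex

noncomputable def diskMobius (a z : ℂ) : ℂ := (z - a) / (1 - conj a * z)

theorem one_sub_conj_mul_ne_zero {a z : ℂ} (ha : ‖a‖ < 1) (hz : ‖z‖ ≤ 1) :
    1 - conj a * z ≠ 0 := by
  intro h
  have : ‖conj a * z‖ < 1 := by
    rw [norm_mul, norm_conj]
    nlinarith [norm_nonneg a, norm_nonneg z]
  rw [← sub_eq_zero.mp h, norm_one] at this
  exact this.false

theorem differentiableAt_diskMobius {a z : ℂ} (ha : ‖a‖ < 1) (hz : ‖z‖ ≤ 1) :
    DifferentiableAt ℂ (diskMobius a) z :=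
  (differentiableAt_id.sub_const a).div ((differentiableAt_id.const_mul _).const_sub 1)
    (one_sub_conj_mul_ne_zero ha hz)

theorem norm_diskMobius_lt_one {a z : ℂ} (ha : ‖a‖ < 1) (hz : ‖z‖ < 1) :
    ‖diskMobius a z‖ < 1 := by
  have hden := one_sub_conj_mul_ne_zero ha hz.le
  have hid : normSq (1 - conj a * z) - normSq (z - a) = (1 - normSq a) * (1 - normSq z) := by
    simp only [normSq_apply, sub_re, sub_im, mul_re, mul_im, one_re, one_im, conj_re, conj_im]
    ring
  have hpos : 0 < (1 - normSq a) * (1 - normSq z) := by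
    rw [← Complex.sq_norm, ← Complex.sq_norm]
    apply mul_pos <;> nlinarith [norm_nonneg a, norm_nonneg z]
  rw [diskMobius, norm_div, div_lt_one (norm_pos_iff.mpr hden), ← sq_lt_sq₀ (norm_nonneg _)
    (norm_nonneg _), Complex.sq_norm, Complex.sq_norm]
  linarith

theorem hasDerivAt_diskMobius_self {a : ℂ} (ha : ‖a‖ < 1) :
    HasDerivAt (diskMobius a) (((1 - ‖a‖ ^ 2 : ℝ) : ℂ)⁻¹) a := by
  have hden : (1 : ℂ) - conj a * a = ((1 - ‖a‖ ^ 2 : ℝ) : ℂ) := by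
    rw [conj_mul']; push_cast; ring
  have hne : ((1 - ‖a‖ ^ 2 : ℝ) : ℂ) ≠ 0 := by
    rw [← hden]; exact one_sub_conj_mul_ne_zero ha ha.le
  refine (((hasDerivAt_id' a).sub_const a).div
    (((hasDerivAt_id' a).const_mul (conj a)).const_sub 1) (hden ▸ hne)).congr_deriv ?_
  rw [hden]
  field_simp
  simp

theorem norm_deriv_zero_le_one_sub_sq_of_mapsTo_ball {φ : ℂ → ℂ}
    (hd : DifferentiableOn ℂ φ (ball 0 1)) (hmaps : MapsTo φ (ball 0 1) (ball 0 1)) :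
    ‖deriv φ 0‖ ≤ 1 - ‖φ 0‖ ^ 2 := by
  have h0 : (0 : ℂ) ∈ ball (0 : ℂ) 1 := mem_ball_self one_pos
  set a := φ 0
  have ha : ‖a‖ < 1 := mem_ball_zero_iff.mp (hmaps h0)
  have hpos : 0 < 1 - ‖a‖ ^ 2 := by nlinarith [norm_nonneg a]
  have hFd : DifferentiableOn ℂ (diskMobius a ∘ φ) (ball 0 1) := fun z hz =>
    ((differentiableAt_diskMobius ha (mem_ball_zero_iff.mp (hmaps hz)).le).comp z
      ((hd z hz).differentiableAt (isOpen_ball.mem_nhds hz))).differentiableWithinAt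
  have hFmaps : MapsTo (diskMobius a ∘ φ) (ball 0 1) (closedBall (diskMobius a (φ 0)) 1) := by
    intro z hz
    simp only [diskMobius, a, sub_self, zero_div, mem_closedBall_zero_iff]
    exact (norm_diskMobius_lt_one ha (mem_ball_zero_iff.mp (hmaps hz))).le
  have hschwarz := norm_deriv_le_div_of_mapsTo_ball hFd hFmaps one_pos
  rw [((hasDerivAt_diskMobius_self ha).comp 0
    ((hd 0 h0).differentiableAt (isOpen_ball.mem_nhds h0)).hasDerivAt).deriv, norm_mul, norm_inv,
    norm_real, Real.norm_of_nonneg hpos.le, div_one, inv_mul_le_iff₀ hpos, mul_one] at hschwarz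
  exact hschwarz

theorem norm_deriv_zero_le_one_sub_sq_of_mapsTo_closedBall {φ : ℂ → ℂ}
    (hd : DifferentiableOn ℂ φ (ball 0 1)) (hmaps : MapsTo φ (ball 0 1) (closedBall 0 1)) :
    ‖deriv φ 0‖ ≤ 1 - ‖φ 0‖ ^ 2 := by
  have h0 : (0 : ℂ) ∈ ball (0 : ℂ) 1 := mem_ball_self one_pos
  by_cases hmax : ∃ z₀ ∈ ball (0 : ℂ) 1, ‖φ z₀‖ = 1
  · obtain ⟨z₀, hz₀, hnorm⟩ := hmax
    have hconst := eqOn_of_isPreconnected_of_isMaxOn_norm (convex_ball (0 : ℂ) 1).isPreconnected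
      isOpen_ball hd hz₀ fun z hz => by
        simpa [hnorm] using mem_closedBall_zero_iff.mp (hmaps hz)
    have hderiv : deriv φ 0 = 0 := by
      rw [(hconst.eventuallyEq_of_mem (isOpen_ball.mem_nhds h0)).deriv_eq]
      exact deriv_const 0 (φ z₀)
    rw [hderiv, hconst h0, Function.const_apply, hnorm]
    norm_num
  · push Not at hmax
    refine norm_deriv_zero_le_one_sub_sq_of_mapsTo_ball hd fun z hz => ?_
    exact mem_ball_zero_iff.mpr
      ((mem_closedBall_zero_iff.mp (hmaps hz)).lt_of_ne (hmax z hz))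

theorem norm_iteratedDeriv_two_le_of_mapsTo_ball {w : ℂ → ℂ}
    (hd : DifferentiableOn ℂ w (ball 0 1)) (hmaps : MapsTo w (ball 0 1) (ball 0 1))
    (hw0 : w 0 = 0) : ‖iteratedDeriv 2 w 0‖ ≤ 2 * (1 - ‖deriv w 0‖ ^ 2) := by
  set φ := dslope w 0
  have hφd : DifferentiableOn ℂ φ (ball 0 1) :=
    (differentiableOn_dslope (ball_mem_nhds 0 one_pos)).mpr hd
  have hφmaps : MapsTo φ (ball 0 1) (closedBall 0 1) := fun z hz => by
    have hmaps' : MapsTo w (ball 0 1) (closedBall (w 0) 1) :=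
      hw0.symm ▸ hmaps.mono_right ball_subset_closedBall
    simpa using norm_dslope_le_div_of_mapsTo_ball hd hmaps' hz
  have hw : w = fun z => z * φ z := funext fun z => by
    simpa [hw0] using (sub_smul_dslope w 0 z).symm
  have hφ : ContDiffAt ℂ 2 φ 0 := (hφd.analyticAt (ball_mem_nhds 0 one_pos)).contDiffAt
  have h2 : iteratedDeriv 2 w 0 = 2 * deriv φ 0 := by
    rw [hw, iteratedDeriv_succ_id_mul_zero (n := 1) hφ, iteratedDeriv_one]
    norm_num
  have h1 : deriv w 0 = φ 0 := (dslope_same w 0).symm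
  rw [h2, h1, norm_mul, Complex.norm_two]
  gcongr
  exact norm_deriv_zero_le_one_sub_sq_of_mapsTo_closedBall hφd hφmaps

theorem add_one_ne_zero_of_re_pos {z : ℂ} (hz : 0 < z.re) : z + 1 ≠ 0 := fun h => by
  have := congrArg re h
  simp only [add_re, one_re, zero_re] at this
  linarith

theorem norm_sub_one_div_add_one_lt_one {z : ℂ} (hz : 0 < z.re) :
    ‖(z - 1) / (z + 1)‖ < 1 := by
  rw [norm_div, div_lt_one (norm_pos_iff.mpr (add_one_ne_zero_of_re_pos hz)),
    ← sq_lt_sq₀ (norm_nonneg _) (norm_nonneg _), Complex.sq_norm, Complex.sq_norm]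
  simp only [normSq_apply, sub_re, sub_im, add_re, add_im, one_re, one_im]
  nlinarith

theorem norm_iteratedDeriv_two_sub_sq_le_of_re_pos {q : ℂ → ℂ}
    (hq : AnalyticOnNhd ℂ q (ball 0 1)) (hq0 : q 0 = 1)
    (hre : ∀ z ∈ ball (0 : ℂ) 1, 0 < (q z).re) :
    ‖iteratedDeriv 2 q 0 - deriv q 0 ^ 2‖ ≤ 4 - ‖deriv q 0‖ ^ 2 := by
  have h0 : (0 : ℂ) ∈ ball (0 : ℂ) 1 := mem_ball_self one_pos
  have hne : ∀ z ∈ ball (0 : ℂ) 1, q z + 1 ≠ 0 := fun z hz =>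
    add_one_ne_zero_of_re_pos (hre z hz)
  set w := fun z => (q z - 1) / (q z + 1)
  have hw : AnalyticOnNhd ℂ w (ball 0 1) := fun z hz =>
    ((hq z hz).sub analyticAt_const).div ((hq z hz).add analyticAt_const) (hne z hz)
  have hschwarz := norm_iteratedDeriv_two_le_of_mapsTo_ball hw.differentiableOn
    (fun z hz => mem_ball_zero_iff.mpr (norm_sub_one_div_add_one_lt_one (hre z hz)))
    (by simp [w, hq0])
  -- Differentiating `w * (q + 1) = q - 1` needs only the product rule.
  have hrel : (fun z => w z * (q z + 1)) =ᶠ[𝓝 0] fun z => q z - 1 := by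
    filter_upwards [isOpen_ball.mem_nhds h0] with z hz using div_mul_cancel₀ _ (hne z hz)
  have hq' : ContDiffAt ℂ 2 q 0 := (hq 0 h0).contDiffAt
  have hw' : ContDiffAt ℂ 2 w 0 := (hw 0 h0).contDiffAt
  have hd1 : 2 * deriv w 0 = deriv q 0 := by
    have := hrel.deriv_eq
    rw [deriv_fun_mul (hw 0 h0).differentiableAt ((hq 0 h0).differentiableAt.add_const 1),
      deriv_add_const, deriv_sub_const, hq0] at this
    simp only [w, hq0, sub_self, zero_div, zero_mul, add_zero] at this
    linear_combination this
  have hd2 : 2 * iteratedDeriv 2 w 0 + 2 * (deriv w 0 * deriv q 0) = iteratedDeriv 2 q 0 := by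
    have := hrel.iteratedDeriv_eq 2
    rw [iteratedDeriv_two_mul hw' (hq'.add contDiffAt_const),
      iteratedDeriv_fun_add hq' contDiffAt_const, iteratedDeriv_fun_sub hq' contDiffAt_const,
      deriv_add_const, hq0] at this
    simp only [w, hq0, sub_self, zero_div, zero_mul, add_zero, iteratedDeriv_const,
      two_ne_zero, if_false, sub_zero] at this
    linear_combination this
  have hkey : iteratedDeriv 2 q 0 - deriv q 0 ^ 2 = 2 * iteratedDeriv 2 w 0 := by
    rw [← hd2, ← hd1]; ring
  rw [hkey, norm_mul, Complex.norm_two, ← hd1, norm_mul, Complex.norm_two]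
  linarith

end Complex

theorem iteratedDeriv_two_id_mul_cexp {h : ℂ → ℂ} (hh : AnalyticAt ℂ h 0) (hh0 : h 0 = 0) :
    iteratedDeriv 2 (fun z => z * exp (h z)) 0 = 2 * deriv h 0 := by
  rw [iteratedDeriv_succ_id_mul_zero (n := 1) (u := fun z => exp (h z)) hh.cexp.contDiffAt,
    iteratedDeriv_one, deriv_cexp hh.differentiableAt, hh0, exp_zero]
  norm_num

theorem iteratedDeriv_three_id_mul_cexp {h : ℂ → ℂ} (hh : AnalyticAt ℂ h 0)
    (hh0 : h 0 = 0) :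
    iteratedDeriv 3 (fun z => z * exp (h z)) 0 = 3 * (deriv h 0 ^ 2 + iteratedDeriv 2 h 0) := by
  rw [iteratedDeriv_succ_id_mul_zero (n := 2) (u := fun z => exp (h z)) hh.cexp.contDiffAt,
    iteratedDeriv_two_cexp_comp hh, hh0, exp_zero]
  norm_num

/-- The function `(f z / z) ^ (α - 1) * f' z`, with the branch of the power given by `h`. -/
noncomputable def bazilevicP (α : ℝ) (f h : ℂ → ℂ) (z : ℂ) : ℂ :=
  exp ((α - 1 : ℂ) * h z) * deriv f z

namespace BazilevicB1

variable {α : ℝ} {f h : ℂ → ℂ}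

theorem eventuallyEq_id_mul_cexp (hf : BazilevicB1 α f h) :
    f =ᶠ[𝓝 0] fun z => z * exp (h z) :=
  eventually_of_mem (isOpen_ball.mem_nhds (mem_ball_self one_pos)) hf.2.2.2.2.2.1

theorem iteratedDeriv_two_eq (hf : BazilevicB1 α f h) :
    iteratedDeriv 2 f 0 = 2 * deriv h 0 := by
  rw [hf.eventuallyEq_id_mul_cexp.iteratedDeriv_eq]
  obtain ⟨-, hh, -, -, hh0, -⟩ := hf
  exact iteratedDeriv_two_id_mul_cexp (hh 0 (mem_ball_self one_pos)) hh0

theorem iteratedDeriv_three_eq (hf : BazilevicB1 α f h) :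
    iteratedDeriv 3 f 0 = 3 * (deriv h 0 ^ 2 + iteratedDeriv 2 h 0) := by
  rw [hf.eventuallyEq_id_mul_cexp.iteratedDeriv_eq]
  obtain ⟨-, hh, -, -, hh0, -⟩ := hf
  exact iteratedDeriv_three_id_mul_cexp (hh 0 (mem_ball_self one_pos)) hh0

theorem coeff2_eq (hf : BazilevicB1 α f h) : coeff2 f = deriv h 0 := by
  rw [coeff2, hf.iteratedDeriv_two_eq]
  ring

theorem coeff3_sub_coeff2_sq (hf : BazilevicB1 α f h) :
    coeff3 f - coeff2 f ^ 2 / 2 = iteratedDeriv 2 h 0 / 2 := by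
  rw [hf.coeff2_eq, coeff3, hf.iteratedDeriv_three_eq]
  ring

theorem analyticOnNhd_bazilevicP (hf : BazilevicB1 α f h) :
    AnalyticOnNhd ℂ (bazilevicP α f h) (ball 0 1) := fun z hz =>
  (analyticAt_const.mul (hf.2.1 z hz)).cexp.mul (hf.1.deriv z hz)

theorem bazilevicP_zero (hf : BazilevicB1 α f h) : bazilevicP α f h 0 = 1 := by
  obtain ⟨-, -, -, hf'0, hh0, -⟩ := hf
  simp [bazilevicP, hf'0, hh0]

theorem re_bazilevicP_pos (hf : BazilevicB1 α f h) :
    ∀ z ∈ ball (0 : ℂ) 1, 0 < (bazilevicP α f h z).re :=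
  hf.2.2.2.2.2.2

theorem deriv_bazilevicP_zero (hf : BazilevicB1 α f h) :
    deriv (bazilevicP α f h) 0 = (α + 1) * deriv h 0 := by
  have hderiv2 : deriv (deriv f) 0 = 2 * deriv h 0 := by
    rw [← hf.iteratedDeriv_two_eq, iteratedDeriv_succ, iteratedDeriv_one]
  obtain ⟨hfA, hhA, -, hf'0, hh0, -⟩ := hf
  have h0 : (0 : ℂ) ∈ ball (0 : ℂ) 1 := mem_ball_self one_pos
  have hv : AnalyticAt ℂ (fun z => (α - 1 : ℂ) * h z) 0 := analyticAt_const.mul (hhA 0 h0)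
  have hE : AnalyticAt ℂ (fun z => exp ((α - 1 : ℂ) * h z)) 0 := hv.cexp
  unfold bazilevicP
  rw [deriv_fun_mul hE.differentiableAt (hfA.deriv 0 h0).differentiableAt,
    deriv_cexp hv.differentiableAt, deriv_const_mul _ (hhA 0 h0).differentiableAt,
    hderiv2, hf'0, hh0]
  simp only [mul_zero, exp_zero, one_mul, mul_one]
  ring

theorem iteratedDeriv_two_bazilevicP_zero (hf : BazilevicB1 α f h) :
    iteratedDeriv 2 (bazilevicP α f h) 0 =
      (α + 2) * iteratedDeriv 2 h 0 + (α ^ 2 + 2 * α) * deriv h 0 ^ 2 := by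
  have hderiv2 : deriv (deriv f) 0 = 2 * deriv h 0 := by
    rw [← hf.iteratedDeriv_two_eq, iteratedDeriv_succ, iteratedDeriv_one]
  have hderiv3 : iteratedDeriv 2 (deriv f) 0 = 3 * (deriv h 0 ^ 2 + iteratedDeriv 2 h 0) := by
    rw [← hf.iteratedDeriv_three_eq, ← iteratedDeriv_succ']
  obtain ⟨hfA, hhA, -, hf'0, hh0, -⟩ := hf
  have h0 : (0 : ℂ) ∈ ball (0 : ℂ) 1 := mem_ball_self one_pos
  have hv : AnalyticAt ℂ (fun z => (α - 1 : ℂ) * h z) 0 := analyticAt_const.mul (hhA 0 h0)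
  have hE : AnalyticAt ℂ (fun z => exp ((α - 1 : ℂ) * h z)) 0 := hv.cexp
  unfold bazilevicP
  rw [iteratedDeriv_two_mul hE.contDiffAt (hfA.deriv 0 h0).contDiffAt,
    iteratedDeriv_two_cexp_comp hv, deriv_cexp hv.differentiableAt,
    deriv_const_mul _ (hhA 0 h0).differentiableAt, iteratedDeriv_const_mul_field,
    hderiv3, hderiv2, hf'0, hh0]
  simp only [mul_zero, exp_zero, one_mul, mul_one]
  ring

theorem norm_mul_iteratedDeriv_two_sub_sq_le (hf : BazilevicB1 α f h) :
    ‖(α + 2) * iteratedDeriv 2 h 0 - deriv h 0 ^ 2‖ ≤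
      4 - (α + 1) ^ 2 * ‖deriv h 0‖ ^ 2 := by
  have hcarath := norm_iteratedDeriv_two_sub_sq_le_of_re_pos hf.analyticOnNhd_bazilevicP
    hf.bazilevicP_zero hf.re_bazilevicP_pos
  have hnorm : ‖(α + 1 : ℂ)‖ ^ 2 = (α + 1) ^ 2 := by
    rw [← ofReal_one, ← ofReal_add, norm_real, Real.norm_eq_abs, sq_abs]
  rw [hf.iteratedDeriv_two_bazilevicP_zero, hf.deriv_bazilevicP_zero, norm_mul] at hcarath
  simp only [mul_pow, hnorm] at hcarath
  convert hcarath using 2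
  ring

end BazilevicB1

theorem stmt_10_general (α : ℝ) (hα : 0 < α) (f h : ℂ → ℂ) (hf : BazilevicB1 α f h) :
    ‖coeff3 f - (coeff2 f) ^ 2 / 2‖ ≥
      (((α + 1) ^ 2 + 1) / (2 * (α + 2))) * ‖coeff2 f‖ ^ 2
        - 2 / (α + 2) := by
  have hα2 : 0 < α + 2 := by linarith
  have hnorm :
      ‖(α + 2 : ℂ) * iteratedDeriv 2 h 0‖ = (α + 2) * ‖iteratedDeriv 2 h 0‖ := by
    rw [norm_mul, ← ofReal_ofNat, ← ofReal_add, norm_real, Real.norm_of_nonneg hα2.le]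
  have htri := norm_le_norm_add_norm_sub' (deriv h 0 ^ 2) ((α + 2 : ℂ) * iteratedDeriv 2 h 0)
  rw [norm_sub_rev, hnorm, norm_pow] at htri
  have hbound := hf.norm_mul_iteratedDeriv_two_sub_sq_le
  rw [ge_iff_le, hf.coeff3_sub_coeff2_sq, hf.coeff2_eq, norm_div, Complex.norm_two,
    show ((α + 1) ^ 2 + 1) / (2 * (α + 2)) * ‖deriv h 0‖ ^ 2 - 2 / (α + 2) =
      (((α + 1) ^ 2 + 1) * ‖deriv h 0‖ ^ 2 - 4) / (2 * (α + 2)) by field_simp; ring,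
    div_le_iff₀ (by positivity)]
  linarith

/-- For `α > 0` and `f ∈ B₁(α)` with `|a₂| ≥ 2/√((α+1)² + 1)`:
`|a₃ - a₂²/2| ≥ (((α+1)² + 1)/(2(α+2))) |a₂|² - 2/(α+2)`. -/
theorem stmt_10 (α : ℝ) (hα : 0 < α) (f h : ℂ → ℂ) (hf : BazilevicB1 α f h)
    (ha2 : ‖coeff2 f‖ ≥ 2 / Real.sqrt ((α + 1) ^ 2 + 1)) :
    ‖coeff3 f - (coeff2 f) ^ 2 / 2‖ ≥
      (((α + 1) ^ 2 + 1) / (2 * (α + 2))) * ‖coeff2 f‖ ^ 2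
        - 2 / (α + 2) :=
  stmt_10_general α hα f h hf
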